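/- arXiv:1204.1118 — 6 statements merged into one kernel-verified Lean document; each statement's English description precedes it below -/
import Mathlib

section
/- The subspace ⁅𝔰, 𝔰⁆ of 𝔤 spanned by all brackets ⁅x, y⁆ with x, y ∈ 𝔰 is equal to 𝔨. -/
/-!
Both `⁅𝔰, 𝔰⁆` and `𝔰` are stable under `ad 𝔨` (the bracket multiplies `θ`-eigenvalues), and
`ad 𝔰` exchanges them, because `⁅𝔰, 𝔰⁆ ⊆ 𝔨`. Since `𝔤 = 𝔨 ⊕ 𝔰`, the sum `⁅𝔰, 𝔰⁆ + 𝔰` is an ideal,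
nonzero because `θ ≠ id`, hence all of `𝔤`. Intersecting with `𝔨` and using `𝔨 ∩ 𝔰 = 0`
gives `⁅𝔰, 𝔰⁆ = 𝔨`.
-/

namespace Module.End

variable {R M : Type*} [CommRing R] [Invertible (2 : R)] [AddCommGroup M] [Module R M]

theorem disjoint_eigenspace_one_eigenspace_neg_one (f : Module.End R M) :
    Disjoint (f.eigenspace 1) (f.eigenspace (-1)) := by
  rw [Submodule.disjoint_def]
  intro x hx_fix hx_anti
  rw [mem_eigenspace_iff, one_smul] at hx_fix
  rw [mem_eigenspace_iff, neg_one_smul, hx_fix, ← sub_eq_zero, sub_neg_eq_add, ← two_smul R]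
    at hx_anti
  simpa using congrArg ((⅟2 : R) • ·) hx_anti

theorem eigenspace_one_sup_eigenspace_neg_one {f : Module.End R M}
    (hf : ∀ x, f (f x) = x) : f.eigenspace 1 ⊔ f.eigenspace (-1) = ⊤ := by
  refine eq_top_iff.mpr fun x _ ↦ Submodule.mem_sup.mpr
    ⟨(⅟2 : R) • (x + f x), ?_, (⅟2 : R) • (x - f x), ?_, ?_⟩
  · rw [mem_eigenspace_iff, map_smul, map_add, hf, add_comm, one_smul]
  · rw [mem_eigenspace_iff, map_smul, map_sub, hf, neg_one_smul, ← smul_neg, neg_sub]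
  · rw [← smul_add, add_add_sub_cancel, ← two_smul R, smul_smul, invOf_mul_self, one_smul]

theorem eigenspace_neg_one_ne_bot {f : Module.End R M} (hf : ∀ x, f (f x) = x)
    (hne : f ≠ 1) : f.eigenspace (-1) ≠ ⊥ := by
  intro hbot
  have htop := eigenspace_one_sup_eigenspace_neg_one hf
  rw [hbot, sup_bot_eq] at htop
  refine hne (LinearMap.ext fun x ↦ ?_)
  simpa using mem_eigenspace_iff.mp (htop ▸ Submodule.mem_top : x ∈ f.eigenspace 1)

end Module.End

open Module.End

namespace LieHom

variable {R L : Type*} [CommRing R] [LieRing L] [LieAlgebra R L] (θ : L →ₗ⁅R⁆ L)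

theorem lie_mem_eigenspace_mul {a b : R} {x y : L} (hx : x ∈ eigenspace (θ : L →ₗ[R] L) a)
    (hy : y ∈ eigenspace (θ : L →ₗ[R] L) b) :
    ⁅x, y⁆ ∈ eigenspace (θ : L →ₗ[R] L) (a * b) := by
  rw [mem_eigenspace_iff] at hx hy ⊢
  simp only [LieHom.coe_toLinearMap] at hx hy ⊢
  rw [map_lie, hx, hy, smul_lie, lie_smul, smul_smul]

/-- `⁅𝔰, 𝔰⁆`, where `𝔰` is the `-1`-eigenspace of `θ`. -/
def antiBracketSpan : Submodule R L :=
  Submodule.span R {z | ∃ x ∈ eigenspace (θ : L →ₗ[R] L) (-1),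
    ∃ y ∈ eigenspace (θ : L →ₗ[R] L) (-1), z = ⁅x, y⁆}

theorem antiBracketSpan_le_eigenspace_one :
    θ.antiBracketSpan ≤ eigenspace (θ : L →ₗ[R] L) 1 := by
  rw [antiBracketSpan, Submodule.span_le]
  rintro z ⟨x, hx, y, hy, rfl⟩
  simpa using θ.lie_mem_eigenspace_mul hx hy

theorem lie_mem_antiBracketSpan {k z : L} (hk : k ∈ eigenspace (θ : L →ₗ[R] L) 1)
    (hz : z ∈ θ.antiBracketSpan) : ⁅k, z⁆ ∈ θ.antiBracketSpan := by
  induction hz using Submodule.span_induction with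
  | mem z hz =>
    obtain ⟨x, hx, y, hy, rfl⟩ := hz
    have hkx : ⁅k, x⁆ ∈ eigenspace (θ : L →ₗ[R] L) (-1) := by
      simpa using θ.lie_mem_eigenspace_mul hk hx
    have hky : ⁅k, y⁆ ∈ eigenspace (θ : L →ₗ[R] L) (-1) := by
      simpa using θ.lie_mem_eigenspace_mul hk hy
    rw [leibniz_lie]
    exact add_mem (Submodule.subset_span ⟨_, hkx, _, hy, rfl⟩)
      (Submodule.subset_span ⟨_, hx, _, hky, rfl⟩)
  | zero => simp
  | add a b _ _ ha hb => rw [lie_add]; exact add_mem ha hb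
  | smul c a _ ha => rw [lie_smul]; exact Submodule.smul_mem _ _ ha

variable [Invertible (2 : R)] {θ}

def antiBracketSpanSupIdeal (hθ : ∀ x, θ (θ x) = x) : LieIdeal R L where
  toSubmodule := θ.antiBracketSpan ⊔ eigenspace (θ : L →ₗ[R] L) (-1)
  lie_mem := by
    intro x a (ha : a ∈ θ.antiBracketSpan ⊔ _)
    change _ ∈ θ.antiBracketSpan ⊔ _
    have hx : x ∈ eigenspace (θ : L →ₗ[R] L) 1 ⊔ eigenspace (θ : L →ₗ[R] L) (-1) := by
      rw [eigenspace_one_sup_eigenspace_neg_one hθ]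
      exact Submodule.mem_top
    obtain ⟨k, hk, s, hs, rfl⟩ := Submodule.mem_sup.mp hx
    obtain ⟨b, hb, t, ht, rfl⟩ := Submodule.mem_sup.mp ha
    have hb_fix : b ∈ eigenspace (θ : L →ₗ[R] L) 1 := θ.antiBracketSpan_le_eigenspace_one hb
    rw [add_lie, lie_add, lie_add]
    refine add_mem (add_mem ?_ ?_) (add_mem ?_ ?_)
    · exact Submodule.mem_sup_left (θ.lie_mem_antiBracketSpan hk hb)
    · exact Submodule.mem_sup_right (by simpa using θ.lie_mem_eigenspace_mul hk ht)
    · exact Submodule.mem_sup_right (by simpa using θ.lie_mem_eigenspace_mul hs hb_fix)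
    · exact Submodule.mem_sup_left (Submodule.subset_span ⟨_, hs, _, ht, rfl⟩)

theorem antiBracketSpan_eq_eigenspace_one [LieAlgebra.IsSimple R L]
    (hθ : ∀ x, θ (θ x) = x) (hne : θ ≠ LieHom.id) :
    θ.antiBracketSpan = eigenspace (θ : L →ₗ[R] L) 1 := by
  have hne' : (θ : L →ₗ[R] L) ≠ 1 := fun h ↦ hne (LieHom.ext fun x ↦ LinearMap.ext_iff.mp h x)
  have hI : antiBracketSpanSupIdeal hθ = ⊤ := by
    refine (LieAlgebra.IsSimple.eq_bot_or_eq_top _).resolve_left fun hbot ↦ ?_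
    refine eigenspace_neg_one_ne_bot hθ hne' (eq_bot_iff.mpr fun s hs ↦ ?_)
    have : s ∈ antiBracketSpanSupIdeal hθ := Submodule.mem_sup_right hs
    rwa [hbot] at this
  have hsup : θ.antiBracketSpan ⊔ eigenspace (θ : L →ₗ[R] L) (-1) = ⊤ :=
    congrArg LieSubmodule.toSubmodule hI
  calc θ.antiBracketSpan
      = θ.antiBracketSpan ⊔ eigenspace (θ : L →ₗ[R] L) (-1) ⊓ eigenspace (θ : L →ₗ[R] L) 1 := by
        rw [inf_comm, (disjoint_eigenspace_one_eigenspace_neg_one _).eq_bot, sup_bot_eq]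
    _ = eigenspace (θ : L →ₗ[R] L) 1 := by
        rw [← sup_inf_assoc_of_le _ θ.antiBracketSpan_le_eigenspace_one, hsup, top_inf_eq]

end LieHom

theorem stmt_2_general
    {L : Type*} [LieRing L] [LieAlgebra ℂ L]
    [LieAlgebra.IsSimple ℂ L]
    (θ : L →ₗ⁅ℂ⁆ L) (hθinv : ∀ x, θ (θ x) = x) (hθne : θ ≠ LieHom.id)
    (𝔨 : LieSubalgebra ℂ L) (h𝔨 : ∀ x, x ∈ 𝔨 ↔ θ x = x)
    (𝔰 : Submodule ℂ L) (h𝔰 : ∀ x, x ∈ 𝔰 ↔ θ x = -x) :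
    Submodule.span ℂ {z : L | ∃ x ∈ 𝔰, ∃ y ∈ 𝔰, z = ⁅x, y⁆} = 𝔨.toSubmodule := by
  have h𝔰' : 𝔰 = eigenspace (θ : L →ₗ[ℂ] L) (-1) := by
    ext x; rw [h𝔰, mem_eigenspace_iff, neg_one_smul]; rfl
  have h𝔨' : 𝔨.toSubmodule = eigenspace (θ : L →ₗ[ℂ] L) 1 := by
    ext x; rw [LieSubalgebra.mem_toSubmodule, h𝔨, mem_eigenspace_iff, one_smul]; rfl
  subst h𝔰'
  rw [h𝔨']
  exact LieHom.antiBracketSpan_eq_eigenspace_one hθinv hθne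

/-- `⁅𝔰, 𝔰⁆ = 𝔨` for the Cartan decomposition `𝔤 = 𝔨 ⊕ 𝔰` of a complex simple Lie
algebra with respect to a nontrivial involution `θ` (used in the proof of Theorem 2.3). -/
theorem stmt_2
    {L : Type*} [LieRing L] [LieAlgebra ℂ L] [Module.Finite ℂ L]
    [LieAlgebra.IsSimple ℂ L]
    (θ : L →ₗ⁅ℂ⁆ L) (hθinv : ∀ x, θ (θ x) = x) (hθne : θ ≠ LieHom.id)
    (𝔨 : LieSubalgebra ℂ L) (h𝔨 : ∀ x, x ∈ 𝔨 ↔ θ x = x)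
    (𝔰 : Submodule ℂ L) (h𝔰 : ∀ x, x ∈ 𝔰 ↔ θ x = -x) :
    Submodule.span ℂ {z : L | ∃ x ∈ 𝔰, ∃ y ∈ 𝔰, z = ⁅x, y⁆} = 𝔨.toSubmodule :=
  stmt_2_general θ hθinv hθne 𝔨 h𝔨 𝔰 h𝔰
end

section
/- Let V be a finite-dimensional vector space over ℂ, θ : V → V a linear involution (θ ∘ θ = id), and V₊ = ker(θ − id), V₋ = ker(θ + id) its eigenspaces. Suppose W₁ and W₂ are θ-invariant subspaces of V with W₁ + W₂ = V and W₁ ∩ W₂ ⊆ V₊. Then V₋ is the (internal) direct sum of V₋ ∩ W₁ and V₋ ∩ W₂, i.e., V₋ = (V₋ ∩ W₁) + (V₋ ∩ W₂) and (V₋ ∩ W₁) ∩ (V₋ ∩ W₂) = 0. -/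
/-!
Every `x ∈ V₋` satisfies `x = ½ (x - θ x)`. Writing `x = w₁ + w₂` with `wᵢ ∈ Wᵢ` splits this as
`½ (w₁ - θ w₁) + ½ (w₂ - θ w₂)`, and each summand lies in `V₋ ∩ Wᵢ` because `Wᵢ` is `θ`-stable.
The intersection `V₋ ∩ W₁ ∩ W₂` lies in `V₊ ∩ V₋ = 0`.
-/

theorem eq_zero_of_eq_neg (K : Type*) {V : Type*} [Field K] [NeZero (2 : K)] [AddCommGroup V]
    [Module K V] {x : V} (hx : x = -x) : x = 0 := by
  have h2x : (2 : K) • x = 0 := by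
    rw [two_smul]
    nth_rewrite 1 [hx]
    exact neg_add_cancel x
  exact (smul_eq_zero.mp h2x).resolve_left two_ne_zero

namespace LinearMap

variable {K V : Type*} [Field K] [AddCommGroup V] [Module K V] (θ : V →ₗ[K] V)

theorem sub_apply_self_eq_neg_of_involutive (hθ : ∀ x, θ (θ x) = x) (x : V) :
    θ (x - θ x) = -(x - θ x) := by
  rw [map_sub, hθ, neg_sub]

theorem eq_inv_two_smul_sub_apply_self [NeZero (2 : K)] {x : V} (hx : θ x = -x) :
    x = (2⁻¹ : K) • (x - θ x) := by
  rw [hx, sub_neg_eq_add, ← two_smul K x, smul_smul, inv_mul_cancel₀ two_ne_zero, one_smul]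

theorem sub_apply_self_mem_inf {Vminus W : Submodule K V} (hθ : ∀ x, θ (θ x) = x)
    (hVminus : ∀ x, x ∈ Vminus ↔ θ x = -x) (hW : ∀ x ∈ W, θ x ∈ W) {w : V} (hw : w ∈ W) :
    w - θ w ∈ Vminus ⊓ W :=
  ⟨(hVminus _).mpr (θ.sub_apply_self_eq_neg_of_involutive hθ w), W.sub_mem hw (hW w hw)⟩

theorem le_inf_sup_inf_of_sup_eq_top [NeZero (2 : K)] {Vminus W₁ W₂ : Submodule K V}
    (hθ : ∀ x, θ (θ x) = x) (hVminus : ∀ x, x ∈ Vminus ↔ θ x = -x)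
    (hW₁ : ∀ x ∈ W₁, θ x ∈ W₁) (hW₂ : ∀ x ∈ W₂, θ x ∈ W₂) (hsum : W₁ ⊔ W₂ = ⊤) :
    Vminus ≤ (Vminus ⊓ W₁) ⊔ (Vminus ⊓ W₂) := by
  intro x hx
  obtain ⟨w₁, hw₁, w₂, hw₂, rfl⟩ := Submodule.mem_sup.mp (hsum ▸ Submodule.mem_top : x ∈ W₁ ⊔ W₂)
  have hsplit : w₁ + w₂ - θ (w₁ + w₂) = (w₁ - θ w₁) + (w₂ - θ w₂) := by
    rw [map_add]; abel
  rw [θ.eq_inv_two_smul_sub_apply_self ((hVminus _).mp hx), hsplit]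
  exact Submodule.smul_mem _ _ (Submodule.add_mem_sup
    (θ.sub_apply_self_mem_inf hθ hVminus hW₁ hw₁) (θ.sub_apply_self_mem_inf hθ hVminus hW₂ hw₂))

theorem fixed_inf_antifixed_eq_bot [NeZero (2 : K)] {Vplus Vminus : Submodule K V}
    (hVplus : ∀ x, x ∈ Vplus ↔ θ x = x) (hVminus : ∀ x, x ∈ Vminus ↔ θ x = -x) :
    Vplus ⊓ Vminus = ⊥ := by
  refine eq_bot_iff.mpr fun x ⟨hxp, hxm⟩ ↦ (Submodule.mem_bot K).mpr (eq_zero_of_eq_neg K ?_)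
  exact ((hVplus x).mp hxp).symm.trans ((hVminus x).mp hxm)

end LinearMap

theorem stmt_3_general
    {V : Type*} [AddCommGroup V] [Module ℂ V]
    (θ : V →ₗ[ℂ] V) (hθinv : ∀ x, θ (θ x) = x)
    (Vplus Vminus : Submodule ℂ V)
    (hVplus : ∀ x, x ∈ Vplus ↔ θ x = x)
    (hVminus : ∀ x, x ∈ Vminus ↔ θ x = -x)
    (W₁ W₂ : Submodule ℂ V)
    (hW₁ : ∀ x ∈ W₁, θ x ∈ W₁) (hW₂ : ∀ x ∈ W₂, θ x ∈ W₂)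
    (hsum : W₁ ⊔ W₂ = ⊤) (hcap : W₁ ⊓ W₂ ≤ Vplus) :
    (Vminus ⊓ W₁) ⊔ (Vminus ⊓ W₂) = Vminus ∧ (Vminus ⊓ W₁) ⊓ (Vminus ⊓ W₂) = ⊥ := by
  refine ⟨le_antisymm (sup_le inf_le_left inf_le_left)
    (θ.le_inf_sup_inf_of_sup_eq_top hθinv hVminus hW₁ hW₂ hsum), eq_bot_iff.mpr ?_⟩
  calc (Vminus ⊓ W₁) ⊓ (Vminus ⊓ W₂) ≤ Vplus ⊓ Vminus :=
        le_inf ((inf_le_inf inf_le_right inf_le_right).trans hcap) (inf_le_left.trans inf_le_left)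
    _ = ⊥ := θ.fixed_inf_antifixed_eq_bot hVplus hVminus

/-- The linear-algebra step in the proof of Theorem 2.3: if `θ` is a linear involution
of a finite-dimensional complex vector space and `W₁, W₂` are `θ`-invariant subspaces
with `W₁ + W₂ = V` and `W₁ ∩ W₂ ⊆ V₊`, then the `(−1)`-eigenspace `V₋` decomposes as
the direct sum of `V₋ ∩ W₁` and `V₋ ∩ W₂`. -/
theorem stmt_3
    {V : Type*} [AddCommGroup V] [Module ℂ V] [FiniteDimensional ℂ V]
    (θ : V →ₗ[ℂ] V) (hθinv : ∀ x, θ (θ x) = x)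
    (Vplus Vminus : Submodule ℂ V)
    (hVplus : ∀ x, x ∈ Vplus ↔ θ x = x)
    (hVminus : ∀ x, x ∈ Vminus ↔ θ x = -x)
    (W₁ W₂ : Submodule ℂ V)
    (hW₁ : ∀ x ∈ W₁, θ x ∈ W₁) (hW₂ : ∀ x ∈ W₂, θ x ∈ W₂)
    (hsum : W₁ ⊔ W₂ = ⊤) (hcap : W₁ ⊓ W₂ ≤ Vplus) :
    (Vminus ⊓ W₁) ⊔ (Vminus ⊓ W₂) = Vminus ∧ (Vminus ⊓ W₁) ⊓ (Vminus ⊓ W₂) = ⊥ :=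
  stmt_3_general θ hθinv Vplus Vminus hVplus hVminus W₁ W₂ hW₁ hW₂ hsum hcap
end

section
/- Let 𝔭 be a Lie subalgebra of 𝔤 with 𝔰 ⊆ 𝔭. Then 𝔭 = 𝔤. -/
/-!
The Lie subalgebra generated by the `-1`-eigenspace `𝔰` of `θ` is normalized by `𝔰` and by the
fixed points of `θ`: these preserve `𝔰`, so they act as derivations preserving the generators.
As `x = ½ (x + θ x) + ½ (x - θ x)`, it is an ideal. It is nonzero because `θ ≠ id`, so by
simplicity it is everything, and it lies in any subalgebra containing `𝔰`.
-/

namespace LieSubalgebra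

variable {R L : Type*} [CommRing R] [LieRing L] [LieAlgebra R L]

theorem mem_normalizer_lieSpan_of_forall_lie_mem {S : Set L} {k : L}
    (h : ∀ s ∈ S, ⁅k, s⁆ ∈ lieSpan R L S) : k ∈ (lieSpan R L S).normalizer := by
  rw [mem_normalizer_iff]
  intro p hp
  induction hp using lieSpan_induction with
  | mem s hs => exact h s hs
  | zero => simp
  | add x y _ _ hx hy => rw [lie_add]; exact add_mem hx hy
  | smul a x _ hx => rw [lie_smul]; exact (lieSpan R L S).smul_mem a hx
  | lie x y hx' hy' hx hy =>
    rw [leibniz_lie]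
    exact add_mem ((lieSpan R L S).lie_mem hx hy') ((lieSpan R L S).lie_mem hx' hy)

theorem eq_bot_or_eq_top_of_normalizer_eq_top [LieAlgebra.IsSimple R L] {H : LieSubalgebra R L}
    (hH : H.normalizer = ⊤) : H = ⊥ ∨ H = ⊤ := by
  obtain ⟨I, rfl⟩ := (exists_lieIdeal_coe_eq_iff (K := H)).mpr fun x y hy =>
    ideal_in_normalizer (hH ▸ mem_top x) hy
  rcases LieAlgebra.IsSimple.eq_bot_or_eq_top I with rfl | rfl
  · exact Or.inl (by ext; simp)
  · exact Or.inr LieIdeal.top_toLieSubalgebra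

end LieSubalgebra

namespace LieHom

open LieSubalgebra

variable {R L : Type*} [CommRing R] [LieRing L] [LieAlgebra R L]
  (θ : L →ₗ⁅R⁆ L)

theorem normalizer_lieSpan_neg_eigenspace_eq_top [Invertible (2 : R)] (hθ : ∀ x, θ (θ x) = x) :
    (lieSpan R L {x | θ x = -x}).normalizer = ⊤ := by
  set N := (lieSpan R L {x | θ x = -x}).normalizer
  have h_fixed : ∀ k, θ k = k → k ∈ N := fun k hk =>
    mem_normalizer_lieSpan_of_forall_lie_mem fun s (hs : θ s = -s) =>
      subset_lieSpan (show θ ⁅k, s⁆ = -⁅k, s⁆ by rw [map_lie, hk, hs, lie_neg])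
  have h_neg : ∀ s, θ s = -s → s ∈ N := fun s hs =>
    le_normalizer _ (subset_lieSpan hs)
  rw [eq_top_iff]
  intro x _
  have hx : x = (⅟2 : R) • (x + θ x) + (⅟2 : R) • (x - θ x) := by
    rw [← smul_add, add_add_sub_cancel, ← two_smul R x, smul_smul, invOf_mul_self, one_smul]
  rw [hx]
  refine add_mem (N.smul_mem _ (h_fixed _ ?_)) (N.smul_mem _ (h_neg _ ?_))
  · rw [map_add, hθ, add_comm]
  · rw [map_sub, hθ, neg_sub]

theorem lieSpan_neg_eigenspace_ne_bot (hθ : ∀ x, θ (θ x) = x) (hθ_ne : θ ≠ LieHom.id) :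
    lieSpan R L {x | θ x = -x} ≠ ⊥ := by
  obtain ⟨x, hx⟩ : ∃ x, θ x ≠ x := by
    by_contra! h
    exact hθ_ne (LieHom.ext h)
  intro h_bot
  have hmem : x - θ x ∈ lieSpan R L {x | θ x = -x} :=
    subset_lieSpan (show θ (x - θ x) = -(x - θ x) by rw [map_sub, hθ, neg_sub])
  rw [h_bot, mem_bot, sub_eq_zero] at hmem
  exact hx hmem.symm

end LieHom

theorem stmt_5_general
    {L : Type*} [LieRing L] [LieAlgebra ℂ L]
    [LieAlgebra.IsSimple ℂ L]
    (θ : L →ₗ⁅ℂ⁆ L) (hθinv : ∀ x, θ (θ x) = x) (hθne : θ ≠ LieHom.id)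
    (𝔰 : Submodule ℂ L) (h𝔰 : ∀ x, x ∈ 𝔰 ↔ θ x = -x)
    (𝔭 : LieSubalgebra ℂ L) (h𝔭 : 𝔰 ≤ 𝔭.toSubmodule) :
    𝔭 = ⊤ := by
  rcases LieSubalgebra.eq_bot_or_eq_top_of_normalizer_eq_top
      (θ.normalizer_lieSpan_neg_eigenspace_eq_top hθinv) with h_bot | h_top
  · exact absurd h_bot (θ.lieSpan_neg_eigenspace_ne_bot hθinv hθne)
  · rw [eq_top_iff, ← h_top, LieSubalgebra.lieSpan_le]
    exact fun x hx => h𝔭 ((h𝔰 x).mpr hx)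

/-- A step in the proof of Theorem 2.3: in a complex simple Lie algebra with
Cartan decomposition `𝔤 = 𝔨 ⊕ 𝔰`, any Lie subalgebra containing `𝔰` equals `𝔤`. -/
theorem stmt_5
    {L : Type*} [LieRing L] [LieAlgebra ℂ L] [Module.Finite ℂ L]
    [LieAlgebra.IsSimple ℂ L]
    (θ : L →ₗ⁅ℂ⁆ L) (hθinv : ∀ x, θ (θ x) = x) (hθne : θ ≠ LieHom.id)
    (𝔨 : LieSubalgebra ℂ L) (h𝔨 : ∀ x, x ∈ 𝔨 ↔ θ x = x)
    (𝔰 : Submodule ℂ L) (h𝔰 : ∀ x, x ∈ 𝔰 ↔ θ x = -x)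
    (𝔭 : LieSubalgebra ℂ L) (h𝔭 : 𝔰 ≤ 𝔭.toSubmodule) :
    𝔭 = ⊤ :=
  stmt_5_general θ hθinv hθne 𝔰 h𝔰 𝔭 h𝔭
end

section
/- No Borel subalgebra (maximal solvable Lie subalgebra) of 𝔤 is contained in 𝔨. Equivalently, if 𝔟 is a solvable Lie subalgebra of 𝔤 contained in 𝔨, then 𝔟 is not maximal among the solvable Lie subalgebras of 𝔤. -/
/-!
Since `θ` fixes `𝔟 ⊆ 𝔨` pointwise, the `(-1)`-eigenspace `𝔰` of `θ` is a nonzero `𝔟`-module, so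
Lie's theorem gives a common eigenvector `v ∈ 𝔰` of the solvable algebra `𝔟`. Then `v ∉ 𝔟` and
`𝔟 ⊕ ℂ v` is a subalgebra containing the abelian ideal `ℂ v` with quotient an image of `𝔟`; so it
is solvable and strictly larger than `𝔟`, contradicting maximality.
-/

/-- A Borel subalgebra of a Lie algebra: a maximal solvable Lie subalgebra. -/
def IsBorelSubalgebra {L : Type*} [LieRing L] [LieAlgebra ℂ L]
    (b : LieSubalgebra ℂ L) : Prop :=
  LieAlgebra.IsSolvable b ∧
    ∀ c : LieSubalgebra ℂ L, LieAlgebra.IsSolvable c → b ≤ c → b = c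

open LieAlgebra

def LieIdeal.mkQ {R L : Type*} [CommRing R] [LieRing L] [LieAlgebra R L]
    (I : LieIdeal R L) : L →ₗ⁅R⁆ L ⧸ I :=
  { (LieSubmodule.Quotient.mk' I : L →ₗ[R] L ⧸ I) with map_lie' := rfl }

namespace LieAlgebra

variable {R L : Type*} [CommRing R] [LieRing L] [LieAlgebra R L]

theorem isSolvable_of_isSolvable_quotient (I : LieIdeal R L) [IsSolvable I]
    [IsSolvable (L ⧸ I)] : IsSolvable L := by
  obtain ⟨k, hk⟩ := IsSolvable.solvable R (L ⧸ I)
  obtain ⟨l, hl⟩ := IsSolvable.solvable R I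
  have hkI : derivedSeries R L k ≤ I := by
    have := LieIdeal.derivedSeries_map_le k (f := I.mkQ)
    rw [hk, le_bot_iff, LieIdeal.map_eq_bot_iff] at this
    exact fun x hx ↦ LieSubmodule.Quotient.mk_eq_zero'.mp (this hx)
  refine IsSolvable.mk (R := R) (k := l + k) (le_bot_iff.mp ?_)
  rw [LieIdeal.derivedSeries_eq_bot_iff] at hl
  calc derivedSeries R L (l + k)
      = derivedSeriesOfIdeal R L l (derivedSeries R L k) := derivedSeriesOfIdeal_add ⊤ l k
    _ ≤ derivedSeriesOfIdeal R L l I := derivedSeriesOfIdeal_mono hkI l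
    _ = ⊥ := hl

end LieAlgebra

namespace LieSubalgebra

variable {R L : Type*} [CommRing R] [LieRing L] [LieAlgebra R L] (𝔟 : LieSubalgebra R L) {v : L}

theorem lie_mem_span_singleton_of_mem_sup (hv : ∀ x ∈ 𝔟, ⁅x, v⁆ ∈ R ∙ v) {x s : L}
    (hx : x ∈ 𝔟.toSubmodule ⊔ R ∙ v) (hs : s ∈ R ∙ v) : ⁅x, s⁆ ∈ R ∙ v := by
  obtain ⟨t, rfl⟩ := Submodule.mem_span_singleton.mp hs
  obtain ⟨b, hb, w, hw, rfl⟩ := Submodule.mem_sup.mp hx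
  obtain ⟨u, rfl⟩ := Submodule.mem_span_singleton.mp hw
  rw [lie_smul, add_lie, smul_lie, lie_self, smul_zero, add_zero]
  exact Submodule.smul_mem _ t (hv b hb)

variable (hv : ∀ x ∈ 𝔟, ⁅x, v⁆ ∈ R ∙ v)

def adjoinEigenvector : LieSubalgebra R L where
  toSubmodule := 𝔟.toSubmodule ⊔ R ∙ v
  lie_mem' {x y} hx hy := by
    obtain ⟨b, hb, s, hs, rfl⟩ := Submodule.mem_sup.mp hy
    rw [lie_add]
    refine add_mem ?_ (Submodule.mem_sup_right (lie_mem_span_singleton_of_mem_sup 𝔟 hv hx hs))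
    obtain ⟨b', hb', s', hs', rfl⟩ := Submodule.mem_sup.mp hx
    rw [add_lie, ← lie_skew s' b]
    exact add_mem (Submodule.mem_sup_left (𝔟.lie_mem hb' hb)) (neg_mem (Submodule.mem_sup_right
      (lie_mem_span_singleton_of_mem_sup 𝔟 hv (Submodule.mem_sup_left hb) hs')))

theorem le_adjoinEigenvector : 𝔟 ≤ 𝔟.adjoinEigenvector hv :=
  fun _ hx ↦ Submodule.mem_sup_left hx

theorem self_mem_adjoinEigenvector : v ∈ 𝔟.adjoinEigenvector hv :=
  Submodule.mem_sup_right (Submodule.mem_span_singleton_self v)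

theorem isSolvable_adjoinEigenvector [IsSolvable 𝔟] : IsSolvable (𝔟.adjoinEigenvector hv) := by
  set c := 𝔟.adjoinEigenvector hv
  let J : LieIdeal R c :=
    { toSubmodule := (R ∙ v).comap c.toSubmodule.subtype
      lie_mem {x m} hm := lie_mem_span_singleton_of_mem_sup 𝔟 hv x.2 hm }
  have : IsLieAbelian J := by
    refine ⟨fun ⟨⟨x, _⟩, hx⟩ ⟨⟨y, _⟩, hy⟩ ↦ ?_⟩
    obtain ⟨s, rfl⟩ := Submodule.mem_span_singleton.mp hx
    obtain ⟨t, rfl⟩ := Submodule.mem_span_singleton.mp hy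
    ext
    simp [lie_smul, smul_lie]
  have : IsSolvable (c ⧸ J) := by
    refine Function.Surjective.lieAlgebra_isSolvable
      (f := J.mkQ.comp (inclusion (𝔟.le_adjoinEigenvector hv))) ?_
    rintro ⟨x⟩
    obtain ⟨b, hb, s, hs, hx⟩ := Submodule.mem_sup.mp x.2
    refine ⟨⟨b, hb⟩, (Submodule.Quotient.eq _).mpr ?_⟩
    change b - x.1 ∈ R ∙ v
    rw [← hx, sub_add_cancel_left]
    exact neg_mem hs
  exact isSolvable_of_isSolvable_quotient J

end LieSubalgebra

namespace LieHom

variable {R L : Type*} [CommRing R] [LieRing L] [LieAlgebra R L] (θ : L →ₗ⁅R⁆ L)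

def eigenLieSubmodule (𝔟 : LieSubalgebra R L) (h𝔟 : ∀ x ∈ 𝔟, θ x = x) (μ : R) :
    LieSubmodule R 𝔟 L where
  toSubmodule := Module.End.eigenspace (θ : Module.End R L) μ
  lie_mem {x m} hm := by
    replace hm : θ m = μ • m := Module.End.mem_eigenspace_iff.mp hm
    refine Module.End.mem_eigenspace_iff.mpr ?_
    rw [LieSubalgebra.coe_bracket_of_module, LieHom.coe_toLinearMap, θ.map_lie, h𝔟 x x.2, hm,
      lie_smul]

@[simp]
theorem mem_eigenLieSubmodule {𝔟 : LieSubalgebra R L} {h𝔟 : ∀ x ∈ 𝔟, θ x = x} {μ : R} {x : L} :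
    x ∈ θ.eigenLieSubmodule 𝔟 h𝔟 μ ↔ θ x = μ • x :=
  Module.End.mem_eigenspace_iff

theorem exists_ne_zero_apply_eq_neg (hθ : ∀ x, θ (θ x) = x) (hθ_ne : θ ≠ LieHom.id) :
    ∃ x ≠ 0, θ x = -x := by
  obtain ⟨y, hy⟩ : ∃ y, θ y ≠ y := by
    by_contra! h
    exact hθ_ne (LieHom.ext h)
  refine ⟨y - θ y, sub_ne_zero.mpr (Ne.symm hy), ?_⟩
  rw [map_sub, hθ, neg_sub]

end LieHom

theorem stmt_6_general
    {L : Type*} [LieRing L] [LieAlgebra ℂ L] [Module.Finite ℂ L]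
    (θ : L →ₗ⁅ℂ⁆ L) (hθinv : ∀ x, θ (θ x) = x) (hθne : θ ≠ LieHom.id)
    (𝔨 : LieSubalgebra ℂ L) (h𝔨 : ∀ x, x ∈ 𝔨 ↔ θ x = x)
    (𝔟 : LieSubalgebra ℂ L) (hb : IsBorelSubalgebra 𝔟) :
    ¬ 𝔟 ≤ 𝔨 := by
  intro h𝔟𝔨
  obtain ⟨h𝔟, h𝔟_max⟩ := hb
  have hfix : ∀ x ∈ 𝔟, θ x = x := fun x hx ↦ (h𝔨 x).mp (h𝔟𝔨 hx)
  let 𝔰 := θ.eigenLieSubmodule 𝔟 hfix (-1)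
  have : Nontrivial 𝔰 := by
    obtain ⟨x, hx0, hx⟩ := θ.exists_ne_zero_apply_eq_neg hθinv hθne
    exact nontrivial_of_ne ⟨x, by simpa [𝔰] using hx⟩ 0 (by simpa using hx0)
  obtain ⟨χ, hχ⟩ := LieModule.exists_nontrivial_weightSpace_of_isSolvable ℂ 𝔟 𝔰
  obtain ⟨⟨⟨v, hθv⟩, hv⟩, hv0⟩ := exists_ne (0 : LieModule.weightSpace 𝔰 χ)
  have hv_ne : v ≠ 0 := by simpa using hv0
  have hline : ∀ x ∈ 𝔟, ⁅x, v⁆ ∈ ℂ ∙ v := fun x hx ↦ by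
    have := congrArg Subtype.val ((LieModule.mem_weightSpace _ _).mp hv ⟨x, hx⟩)
    exact Submodule.mem_span_singleton.mpr ⟨χ ⟨x, hx⟩, this.symm⟩
  have hv_notMem : v ∉ 𝔟 := fun hv𝔟 ↦ by
    rw [θ.mem_eigenLieSubmodule, hfix v hv𝔟, neg_one_smul, eq_neg_iff_add_eq_zero, ← two_smul ℂ,
      smul_eq_zero] at hθv
    exact hv_ne (hθv.resolve_left two_ne_zero)
  have h𝔟_eq := h𝔟_max _ (𝔟.isSolvable_adjoinEigenvector hline) (𝔟.le_adjoinEigenvector hline)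
  exact hv_notMem (h𝔟_eq ▸ 𝔟.self_mem_adjoinEigenvector hline)

/-- No Borel subalgebra of a complex simple Lie algebra `𝔤` with nontrivial
involution `θ` is contained in the fixed-point subalgebra `𝔨`. -/
theorem stmt_6
    {L : Type*} [LieRing L] [LieAlgebra ℂ L] [Module.Finite ℂ L]
    [LieAlgebra.IsSimple ℂ L]
    (θ : L →ₗ⁅ℂ⁆ L) (hθinv : ∀ x, θ (θ x) = x) (hθne : θ ≠ LieHom.id)
    (𝔨 : LieSubalgebra ℂ L) (h𝔨 : ∀ x, x ∈ 𝔨 ↔ θ x = x)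
    (𝔟 : LieSubalgebra ℂ L) (hb : IsBorelSubalgebra 𝔟) :
    ¬ 𝔟 ≤ 𝔨 :=
  stmt_6_general θ hθinv hθne 𝔨 h𝔨 𝔟 hb
end

section
/- Let 1 ≤ r < p and q ≥ 1, n = p + q, and let G = SL_n(ℂ) with the topology induced from the space of n × n complex matrices. Let P₁ = {g ∈ G : g i j = 0 whenever j < r ≤ i or j < p ≤ i} (the stabilizer of the flag ℂ^r ⊂ ℂ^p ⊂ ℂ^n of coordinate subspaces) and P₂ = {g ∈ G : g i j = 0 whenever i < p ≤ j}. Then: (a) P₁ ∩ P₂ = Q where Q = {g ∈ G : g i j = 0 whenever j < r ≤ i, or j < p ≤ i, or i < p ≤ j} (a proper parabolic subgroup of the block diagonal subgroup K ≅ S(GL_p × GL_q)); and (b) the set {a · b : a ∈ P₁, b ∈ P₂} is dense in G. -/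
/-!
Every upper triangular matrix of determinant one lies in `P₁` and every lower triangular one in
`P₂`, so it suffices that the big cell `B⁺B⁻` is dense in `SL_n`. Gaussian elimination from the
bottom-right corner factors a matrix whose trailing principal minors are all nonzero as an upper
unitriangular times a lower triangular matrix. For `g ∈ SL_n`, each trailing minor of `g + t • 1`
is a monic polynomial in `t`, so all of them are nonzero for all but finitely many `t`; rescaling
the first row to restore determinant one changes none of the smaller minors, and letting `t → 0`
exhibits `g` as a limit of points of the big cell.
-/

open Matrix Filter Topology Pointwise

namespace Matrix

section Border

variable {R : Type*} {n : ℕ}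

/-- The block matrix `!![a, b; c, D]` with a `1 × 1` top-left corner. -/
def border (a : R) (b c : Fin n → R) (D : Matrix (Fin n) (Fin n) R) :
    Matrix (Fin (n + 1)) (Fin (n + 1)) R :=
  of (Fin.cons (Fin.cons a b) fun i => Fin.cons (c i) (D i))

variable (a : R) (b c : Fin n → R) (D : Matrix (Fin n) (Fin n) R)

@[simp] theorem border_zero_zero : border a b c D 0 0 = a := rfl
@[simp] theorem border_zero_succ (j : Fin n) : border a b c D 0 j.succ = b j := rfl
@[simp] theorem border_succ_zero (i : Fin n) : border a b c D i.succ 0 = c i := rfl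
@[simp] theorem border_succ_succ (i j : Fin n) : border a b c D i.succ j.succ = D i j := rfl

theorem border_eta (M : Matrix (Fin (n + 1)) (Fin (n + 1)) R) :
    border (M 0 0) (fun j => M 0 j.succ) (fun i => M i.succ 0) (M.submatrix Fin.succ Fin.succ) =
      M := by
  ext i j
  cases i using Fin.cases <;> cases j using Fin.cases <;> rfl

theorem border_mul_border [CommSemiring R] (a' : R) (b' c' : Fin n → R)
    (D' : Matrix (Fin n) (Fin n) R) :
    border a b c D * border a' b' c' D' =
      border (a * a' + b ⬝ᵥ c') (a • b' + b ᵥ* D') (a' • c + D *ᵥ c')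
        (vecMulVec c b' + D * D') := by
  ext i j
  cases i using Fin.cases <;> cases j using Fin.cases <;>
    simp [mul_apply, Fin.sum_univ_succ, dotProduct, vecMul, mulVec, vecMulVec_apply, mul_comm]

theorem IsUpperTriangular.border [Zero R] {D : Matrix (Fin n) (Fin n) R}
    (hD : D.IsUpperTriangular) :
    (border a b 0 D).IsUpperTriangular := by
  intro i j hij
  cases i using Fin.cases with
  | zero => exact absurd hij (Fin.not_lt_zero j)
  | succ i =>
    cases j using Fin.cases with
    | zero => rfl
    | succ j => exact hD (Fin.succ_lt_succ_iff.mp hij)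

theorem IsLowerTriangular.border [Zero R] {D : Matrix (Fin n) (Fin n) R}
    (hD : D.IsLowerTriangular) :
    (border a 0 c D).IsLowerTriangular := by
  intro i j hij
  cases j using Fin.cases with
  | zero => exact absurd hij (Fin.not_lt_zero i)
  | succ j =>
    cases i using Fin.cases with
    | zero => rfl
    | succ i => exact hD (Fin.succ_lt_succ_iff.mp hij)

end Border

theorem det_eq_one_of_isUpperTriangular {R : Type*} [CommRing R] {n : ℕ}
    {U : Matrix (Fin n) (Fin n) R} (hU : U.IsUpperTriangular) (hdiag : ∀ i, U i i = 1) :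
    U.det = 1 := by
  rw [det_of_isUpperTriangular hU]
  exact Finset.prod_eq_one fun i _ => hdiag i

section TrailingMinors

variable {K : Type*} [Field K]

/-- All trailing principal minors `det g[k:, k:]`, `0 ≤ k < n`, are nonzero. -/
def TrailingMinorsNeZero : ∀ {n : ℕ}, Matrix (Fin n) (Fin n) K → Prop
  | 0, _ => True
  | _ + 1, g => g.det ≠ 0 ∧ TrailingMinorsNeZero (g.submatrix Fin.succ Fin.succ)

theorem TrailingMinorsNeZero.det_ne_zero {n : ℕ} {g : Matrix (Fin n) (Fin n) K}
    (hg : g.TrailingMinorsNeZero) : g.det ≠ 0 := by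
  cases n with
  | zero => simp
  | succ n => exact hg.1

theorem TrailingMinorsNeZero.exists_eq_upper_mul_lower : ∀ {n : ℕ} {g : Matrix (Fin n) (Fin n) K},
    g.TrailingMinorsNeZero → ∃ U L : Matrix (Fin n) (Fin n) K,
      U.IsUpperTriangular ∧ (∀ i, U i i = 1) ∧ L.IsLowerTriangular ∧ g = U * L
  | 0, g, _ => ⟨1, 1, fun i => i.elim0, fun i => i.elim0, fun i => i.elim0,
      Subsingleton.elim _ _⟩
  | n + 1, g, ⟨_, hD⟩ => by
    obtain ⟨U', L', hU', hU'diag, hL', hD_eq⟩ := hD.exists_eq_upper_mul_lower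
    have hU'det : IsUnit U'.det := by simp [det_eq_one_of_isUpperTriangular hU' hU'diag]
    have hL'det : IsUnit L'.det := by
      refine isUnit_of_mul_isUnit_right (x := U'.det) ?_
      rw [← det_mul, ← hD_eq]
      exact hD.det_ne_zero.isUnit
    -- Solve `!![1, u; 0, U'] * !![l, 0; w, L'] = !![g 0 0, g 0 _; g _ 0, U' * L']` for `u, w, l`.
    set u := (fun j => g 0 j.succ) ᵥ* L'⁻¹
    set w := U'⁻¹ *ᵥ fun i => g i.succ 0
    refine ⟨border 1 u 0 U', border (g 0 0 - u ⬝ᵥ w) 0 w L', hU'.border _ _,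
      fun i => ?_, hL'.border _ _, ?_⟩
    · cases i using Fin.cases <;> simp [hU'diag]
    · conv_lhs => rw [← border_eta g]
      rw [border_mul_border]
      congr 1
      · simp
      · simp [u, vecMul_vecMul, nonsing_inv_mul _ hL'det]
      · simp [w, mulVec_mulVec, mul_nonsing_inv _ hU'det]
      · simp [hD_eq]

theorem det_add_smul_one_eq_eval_charpoly {n : ℕ} (g : Matrix (Fin n) (Fin n) K) (t : K) :
    (g + t • 1).det = (-g).charpoly.eval t := by
  rw [eval_charpoly, sub_neg_eq_add, add_comm, smul_one_eq_diagonal, scalar_apply]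

theorem finite_setOf_not_trailingMinorsNeZero_add_smul_one :
    ∀ {n : ℕ} (g : Matrix (Fin n) (Fin n) K),
      {t : K | ¬ (g + t • 1).TrailingMinorsNeZero}.Finite
  | 0, _ => by simp [TrailingMinorsNeZero]
  | n + 1, g => by
    have hroots : {t : K | (g + t • 1).det = 0}.Finite := by
      simpa only [det_add_smul_one_eq_eval_charpoly, Polynomial.IsRoot.def] using
        Polynomial.finite_setOfPred_isRoot (charpoly_monic (-g)).ne_zero
    have hsub : ∀ t : K, (g + t • 1).submatrix Fin.succ Fin.succ =
        g.submatrix Fin.succ Fin.succ + t • 1 := fun t => by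
      ext i j; simp [one_apply]
    have hsmaller :=
      finite_setOf_not_trailingMinorsNeZero_add_smul_one (g.submatrix Fin.succ Fin.succ)
    refine (hroots.union hsmaller).subset fun t ht => ?_
    simpa only [TrailingMinorsNeZero, hsub, not_and_or, not_not, Set.mem_union, Set.mem_ofPred_eq]
      using ht

end TrailingMinors

section BigCell

variable (K : Type*) [Field K] (n : ℕ)

/-- The big cell `B⁺B⁻` of `SL_n(K)`, with `B^±` the upper and lower triangular subgroups. -/
def bigCell : Set (Matrix (Fin n) (Fin n) K) :=
  {U | U.IsUpperTriangular ∧ U.det = 1} * {L | L.IsLowerTriangular ∧ L.det = 1}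

variable {K n}

theorem TrailingMinorsNeZero.mem_bigCell {g : Matrix (Fin n) (Fin n) K}
    (hg : g.TrailingMinorsNeZero) (hdet : g.det = 1) : g ∈ bigCell K n := by
  obtain ⟨U, L, hU, hUdiag, hL, rfl⟩ := hg.exists_eq_upper_mul_lower
  have hUdet := det_eq_one_of_isUpperTriangular hU hUdiag
  exact ⟨U, ⟨hU, hUdet⟩, L, ⟨hL, by rwa [det_mul, hUdet, one_mul] at hdet⟩, rfl⟩

end BigCell

theorem mem_closure_bigCell {K : Type*} [NontriviallyNormedField K] {n : ℕ}
    {g : Matrix (Fin n) (Fin n) K} (hg : g.det = 1) : g ∈ closure (bigCell K n) := by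
  rcases n with _ | n
  · exact subset_closure ((show g.TrailingMinorsNeZero from trivial).mem_bigCell hg)
  let f : K → Matrix (Fin (n + 1)) (Fin (n + 1)) K := fun t =>
    (g + t • 1).updateRow 0 ((g + t • 1).det⁻¹ • (g + t • 1) 0)
  have hf0 : f 0 = g := by simp [f, hg, updateRow_eq_self]
  have hf : ContinuousAt f 0 := by fun_prop (disch := simp [hg])
  have hgood : ∀ᶠ t in 𝓝[≠] 0, f t ∈ bigCell K (n + 1) := by
    have hbad := finite_setOf_not_trailingMinorsNeZero_add_smul_one g
    filter_upwards [hbad.eventually_cofinite_notMem.filter_mono (nhdsNE_le_cofinite 0)] with t ht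
    have ht : (g + t • 1).TrailingMinorsNeZero := not_not.mp ht
    have hdet : (f t).det = 1 := by
      simp only [f, det_updateRow_smul, updateRow_eq_self, inv_mul_cancel₀ ht.1]
    have hsub : (f t).submatrix Fin.succ Fin.succ = (g + t • 1).submatrix Fin.succ Fin.succ := by
      ext i j
      simp [f]
    exact TrailingMinorsNeZero.mem_bigCell ⟨by simp [hdet], hsub ▸ ht.2⟩ hdet
  exact mem_closure_of_tendsto (hf0 ▸ hf.tendsto.mono_left nhdsWithin_le_nhds) hgood

end Matrix

theorem stmt_13_general (r p q : ℕ)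
    (G P₁ P₂ Q : Set (Matrix (Fin (p + q)) (Fin (p + q)) ℂ))
    (hG : G = {g | g.det = 1})
    (hP₁ : P₁ = {g | g.det = 1 ∧
      ∀ i j : Fin (p + q),
        (((j : ℕ) < r ∧ r ≤ (i : ℕ)) ∨ ((j : ℕ) < p ∧ p ≤ (i : ℕ))) →
          g i j = 0})
    (hP₂ : P₂ = {g | g.det = 1 ∧
      ∀ i j : Fin (p + q), (i : ℕ) < p → p ≤ (j : ℕ) → g i j = 0})
    (hQ : Q = {g | g.det = 1 ∧
      ∀ i j : Fin (p + q),
        (((j : ℕ) < r ∧ r ≤ (i : ℕ)) ∨ ((j : ℕ) < p ∧ p ≤ (i : ℕ)) ∨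
          ((i : ℕ) < p ∧ p ≤ (j : ℕ))) →
          g i j = 0}) :
    P₁ ∩ P₂ = Q ∧
      ∀ g ∈ G, g ∈ closure {m | ∃ a ∈ P₁, ∃ b ∈ P₂, m = a * b} := by
  subst hG hP₁ hP₂ hQ
  refine ⟨?_, fun g hg => closure_mono ?_ (Matrix.mem_closure_bigCell hg)⟩
  · ext g
    simp only [Set.mem_inter_iff, Set.mem_ofPred_eq]
    grind
  · rintro _ ⟨U, ⟨hU, hUdet⟩, L, ⟨hL, hLdet⟩, rfl⟩
    refine ⟨U, ⟨hUdet, fun i j hij => hU ?_⟩, L, ⟨hLdet, fun i j hi hj => hL ?_⟩, rfl⟩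
    · change j < i
      omega
    · change i < j
      omega

/-- **Theorem 2.5 (1)** for the Hermitian pair `(SL_{p+q}(ℂ), S(GL_p × GL_q))`
with `Q` a proper parabolic subgroup of `K`: the parabolic `P₁` stabilizing
the flag `ℂ^r ⊂ ℂ^p ⊂ ℂ^n` and the block lower triangular parabolic `P₂`
intersect in `Q` and their product `P₁P₂` is dense in `G = SL_n(ℂ)`. -/
theorem stmt_13 (r p q : ℕ) (hr : 1 ≤ r) (hrp : r < p) (hq : 1 ≤ q)
    (G P₁ P₂ Q : Set (Matrix (Fin (p + q)) (Fin (p + q)) ℂ))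
    (hG : G = {g | g.det = 1})
    (hP₁ : P₁ = {g | g.det = 1 ∧
      ∀ i j : Fin (p + q),
        (((j : ℕ) < r ∧ r ≤ (i : ℕ)) ∨ ((j : ℕ) < p ∧ p ≤ (i : ℕ))) →
          g i j = 0})
    (hP₂ : P₂ = {g | g.det = 1 ∧
      ∀ i j : Fin (p + q), (i : ℕ) < p → p ≤ (j : ℕ) → g i j = 0})
    (hQ : Q = {g | g.det = 1 ∧
      ∀ i j : Fin (p + q),
        (((j : ℕ) < r ∧ r ≤ (i : ℕ)) ∨ ((j : ℕ) < p ∧ p ≤ (i : ℕ)) ∨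
          ((i : ℕ) < p ∧ p ≤ (j : ℕ))) →
          g i j = 0}) :
    P₁ ∩ P₂ = Q ∧
      ∀ g ∈ G, g ∈ closure {m | ∃ a ∈ P₁, ∃ b ∈ P₂, m = a * b} :=
  stmt_13_general r p q G P₁ P₂ Q hG hP₁ hP₂ hQ
end

section
/- Let n ≥ 1 and let Sp_{2n}(ℂ) = {M ∈ Mat_{2n×2n}(ℂ) : M J Mᵀ = J}, where J is the standard skew-symmetric block matrix with blocks J = [[0, 1],[−1, 0]] (1 the n × n identity), indexed by the type Fin n ⊕ Fin n, with the topology induced from the space of 2n × 2n complex matrices. Let P₁ = {g ∈ Sp_{2n}(ℂ) : g (inr i) (inl j) = 0 for all i, j} and P₂ = {g ∈ Sp_{2n}(ℂ) : g (inl i) (inr j) = 0 for all i, j} (the two opposite Siegel parabolic subgroups). Then: (a) P₁ ∩ P₂ = {g ∈ Sp_{2n}(ℂ) : g (inr i) (inl j) = 0 and g (inl i) (inr j) = 0 for all i, j}, the block diagonal subgroup (isomorphic to GL_n(ℂ), the symmetric subgroup K); and (b) the set {a · b : a ∈ P₁, b ∈ P₂} is dense in Sp_{2n}(ℂ). -/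
/-!
A symplectic matrix `g = [[A, B], [C, D]]` whose block `D` is invertible factors as
`[[1, B D⁻¹], [0, 1]] * [[A - B D⁻¹ C, 0], [C, D]]`, the first factor lying in `P₁` and the second
in `P₂` (the symplectic relation `Bᵀ D = Dᵀ B` makes `B D⁻¹` symmetric). It therefore suffices
to approximate an arbitrary `g` by symplectic matrices with invertible lower-right block. The
columns of `[B; D]` span a Lagrangian subspace, and bringing `D` to diagonal form yields a
symmetric `S` with `D + S B` invertible; then `[[1, 0], [t S, 1]] * g` is symplectic with
lower-right block `D + t S B`, whose determinant is a polynomial in `t` that does not vanish at `t = 1`, hence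
vanishes at only finitely many `t`, and letting `t → 0` gives `g`.
-/

open Matrix Topology

namespace Matrix

variable {ι K : Type*} [Fintype ι] [DecidableEq ι] [Field K]

theorem exists_isSymm_isUnit_det_diagonal_add_mul {d : ι → K} {B : Matrix ι ι K}
    (hB : Bᵀ * diagonal d = diagonal d * B)
    (hker : ∀ x, B *ᵥ x = 0 → diagonal d *ᵥ x = 0 → x = 0) :
    ∃ X : Matrix ι ι K, X.IsSymm ∧ IsUnit (diagonal d + X * B).det := by
  classical
  -- `X` is the projection onto the coordinates where `d` vanishes; there the symmetry of
  -- `Bᵀ * diagonal d` forces `B i j = 0` whenever `d i ≠ 0 = d j`.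
  refine ⟨diagonal fun i => if d i = 0 then 1 else 0, isSymm_diagonal _, ?_⟩
  rw [isUnit_iff_ne_zero, Ne, ← exists_mulVec_eq_zero_iff]
  rintro ⟨x, hx0, hx⟩
  have hrow (i : ι) : d i * x i + (if d i = 0 then 1 else 0) * (B *ᵥ x) i = 0 := by
    simpa [add_mulVec, ← mulVec_mulVec, mulVec_diagonal] using congrFun hx i
  have hx_of_ne (i : ι) (hi : d i ≠ 0) : x i = 0 := by simpa [hi] using hrow i
  have hB_of_ne (i j : ι) (hi : d i ≠ 0) (hj : d j = 0) : B i j = 0 := by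
    have := congrFun₂ hB j i
    simp_all [mul_diagonal, diagonal_mul]
  refine hx0 (hker x (funext fun i => ?_) (funext fun i => ?_))
  · by_cases hi : d i = 0
    · simpa [hi] using hrow i
    · refine Finset.sum_eq_zero fun j _ => ?_
      by_cases hj : d j = 0
      · simp [hB_of_ne i j hi hj]
      · simp [hx_of_ne j hj]
  · by_cases hi : d i = 0 <;> simp [mulVec_diagonal, hi, hx_of_ne]
theorem exists_isSymm_isUnit_det_add_mul {B D : Matrix ι ι K} (hBD : Bᵀ * D = Dᵀ * B)
    (hker : ∀ x, B *ᵥ x = 0 → D *ᵥ x = 0 → x = 0) :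
    ∃ S : Matrix ι ι K, S.IsSymm ∧ IsUnit (D + S * B).det := by
  obtain ⟨L, L', d, hD⟩ := Pivot.exists_list_transvec_mul_diagonal_mul_list_transvec D
  set T := (L.map TransvectionStruct.toMatrix).prod
  set P := (L'.map TransvectionStruct.toMatrix).prod
  have hT : IsUnit T.det := by simp [T, TransvectionStruct.det_toMatrix_prod]
  have hP : IsUnit P.det := by simp [P, TransvectionStruct.det_toMatrix_prod]
  have hTt : IsUnit Tᵀ.det := by rwa [det_transpose]
  have hPt : IsUnit Pᵀ.det := by rwa [det_transpose]
  -- with `S = T * X * Tᵀ`, the problem for `(B, D)` is the one for `(B', diagonal d)`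
  set B' := Tᵀ * B * P⁻¹
  have hsym : B'ᵀ * diagonal d = diagonal d * B' := calc
    B'ᵀ * diagonal d = P⁻¹ᵀ * (Bᵀ * D) * P⁻¹ := by
      simp [B', hD, transpose_mul, Matrix.mul_assoc, mul_nonsing_inv _ hP]
    _ = P⁻¹ᵀ * (Dᵀ * B) * P⁻¹ := by rw [hBD]
    _ = diagonal d * B' := by
      simp [B', hD, transpose_mul, Matrix.mul_assoc, transpose_nonsing_inv,
        nonsing_inv_mul_cancel_left _ _ hPt]
  have hker' : ∀ x, B' *ᵥ x = 0 → diagonal d *ᵥ x = 0 → x = 0 := by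
    intro x hBx hdx
    have hy : P⁻¹ *ᵥ x = 0 := hker _
      (eq_zero_of_mulVec_eq_zero hTt.ne_zero
        (by simpa [B', mulVec_mulVec, Matrix.mul_assoc] using hBx))
      (by rw [hD, mulVec_mulVec, Matrix.mul_assoc, Matrix.mul_assoc, mul_nonsing_inv _ hP,
        Matrix.mul_one, ← mulVec_mulVec, hdx, mulVec_zero])
    simpa [mulVec_mulVec, mul_nonsing_inv _ hP] using congrArg (P *ᵥ ·) hy
  obtain ⟨X, hX, hdet⟩ := exists_isSymm_isUnit_det_diagonal_add_mul hsym hker'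
  refine ⟨T * X * Tᵀ, ?_, ?_⟩
  · simp [IsSymm, transpose_mul, hX.eq, Matrix.mul_assoc]
  · have : D + T * X * Tᵀ * B = T * (diagonal d + X * B') * P := by
      simp [B', hD, Matrix.mul_add, Matrix.add_mul, Matrix.mul_assoc, nonsing_inv_mul _ hP]
    rw [this, det_mul, det_mul]
    exact (hT.mul hdet).mul hP

section Topology

variable {𝕜 : Type*} [Field 𝕜] [TopologicalSpace 𝕜] [T1Space 𝕜] [∀ t : 𝕜, (𝓝[≠] t).NeBot]

open Polynomial in
theorem dense_setOf_det_add_smul_ne_zero {A M : Matrix ι ι 𝕜} (h : (A + M).det ≠ 0) :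
    Dense {t : 𝕜 | (A + t • M).det ≠ 0} := by
  set p : 𝕜[X] := (A.map C + (X : 𝕜[X]) • M.map C).det
  have hp (t : 𝕜) : p.eval t = (A + t • M).det := by
    rw [← coe_evalRingHom, RingHom.map_det, RingHom.mapMatrix_apply]
    congr 1
    ext i j
    simpa using mul_comm _ _
  have hp0 : p ≠ 0 := fun h0 => h (by simpa [h0] using (hp 1).symm)
  convert dense_univ.sdiff_finite (finite_setOfPred_isRoot hp0) using 1
  ext t
  simp [hp]

end Topology

end Matrix

namespace SymplecticGroup

variable {l R : Type*} [Fintype l] [DecidableEq l] [CommRing R]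

theorem mem_iff_neg_J {A : Matrix (l ⊕ l) (l ⊕ l) R} :
    A ∈ symplecticGroup l R ↔ A * -J l R * Aᵀ = -J l R := by
  rw [mem_iff, Matrix.mul_neg, Matrix.neg_mul, neg_inj]

theorem fromBlocks_one_symm_zero_one_mem {Y : Matrix l l R} (hY : Y.IsSymm) :
    fromBlocks 1 Y 0 1 ∈ symplecticGroup l R :=
  fromBlocks_mem_iff.2 ⟨by simp, by simpa using hY.eq, by simp⟩

theorem fromBlocks_one_zero_symm_one_mem {Y : Matrix l l R} (hY : Y.IsSymm) :
    fromBlocks 1 0 Y 1 ∈ symplecticGroup l R := by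
  simpa [fromBlocks_transpose, hY.eq] using transpose_mem (fromBlocks_one_symm_zero_one_mem hY)

theorem transpose_toBlocks₁₂_mul_toBlocks₂₂ {g : Matrix (l ⊕ l) (l ⊕ l) R}
    (hg : g ∈ symplecticGroup l R) :
    g.toBlocks₁₂ᵀ * g.toBlocks₂₂ = g.toBlocks₂₂ᵀ * g.toBlocks₁₂ :=
  (fromBlocks_mem_iff.1 (g.fromBlocks_toBlocks ▸ hg)).2.1

theorem eq_zero_of_toBlocks₁₂_mulVec_eq_zero {g : Matrix (l ⊕ l) (l ⊕ l) R}
    (hg : g ∈ symplecticGroup l R) {x : l → R} (hB : g.toBlocks₁₂ *ᵥ x = 0)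
    (hD : g.toBlocks₂₂ *ᵥ x = 0) : x = 0 := by
  have : g *ᵥ Sum.elim 0 x = g *ᵥ 0 := by
    rw [← g.fromBlocks_toBlocks, fromBlocks_mulVec]
    simp [hB, hD]
  have hinj :=
    mulVec_injective_of_det_mem_nonZeroDivisors (symplectic_det hg).mem_nonZeroDivisors
  exact funext fun i => congrFun (hinj this) (Sum.inr i)

theorem exists_mul_eq_of_isUnit_det_toBlocks₂₂ {g : Matrix (l ⊕ l) (l ⊕ l) R}
    (hg : g ∈ symplecticGroup l R) (hD : IsUnit g.toBlocks₂₂.det) :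
    ∃ a ∈ symplecticGroup l R, a.toBlocks₂₁ = 0 ∧
      ∃ b ∈ symplecticGroup l R, b.toBlocks₁₂ = 0 ∧ a * b = g := by
  set X := g.toBlocks₁₂ * g.toBlocks₂₂⁻¹
  have hDt : IsUnit g.toBlocks₂₂ᵀ.det := by rwa [det_transpose]
  have hX : X.IsSymm := calc
    Xᵀ = g.toBlocks₂₂ᵀ⁻¹ * (g.toBlocks₁₂ᵀ * g.toBlocks₂₂) * g.toBlocks₂₂⁻¹ := by
      simp [X, transpose_mul, transpose_nonsing_inv, Matrix.mul_assoc, mul_nonsing_inv _ hD]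
    _ = g.toBlocks₂₂ᵀ⁻¹ * (g.toBlocks₂₂ᵀ * g.toBlocks₁₂) * g.toBlocks₂₂⁻¹ := by
      rw [transpose_toBlocks₁₂_mul_toBlocks₂₂ hg]
    _ = X := by rw [nonsing_inv_mul_cancel_left _ _ hDt]
  refine ⟨fromBlocks 1 X 0 1, fromBlocks_one_symm_zero_one_mem hX, toBlocks_fromBlocks₂₁ ..,
    fromBlocks 1 (-X) 0 1 * g, mul_mem (fromBlocks_one_symm_zero_one_mem hX.neg) hg, ?_, ?_⟩
  · rw [← g.fromBlocks_toBlocks]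
    simp [fromBlocks_multiply, X, nonsing_inv_mul_cancel_right _ _ hD]
  · rw [← Matrix.mul_assoc, fromBlocks_multiply]
    simp

theorem mem_closure_setOf_isUnit_det_toBlocks₂₂ {𝕜 : Type*} [Field 𝕜] [TopologicalSpace 𝕜]
    [IsTopologicalRing 𝕜] [T1Space 𝕜] [∀ t : 𝕜, (𝓝[≠] t).NeBot] {g : Matrix (l ⊕ l) (l ⊕ l) 𝕜}
    (hg : g ∈ symplecticGroup l 𝕜) :
    g ∈ closure {h ∈ symplecticGroup l 𝕜 | IsUnit h.toBlocks₂₂.det} := by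
  obtain ⟨S, hS, hdet⟩ :=
    exists_isSymm_isUnit_det_add_mul (transpose_toBlocks₁₂_mul_toBlocks₂₂ hg)
      fun _ => eq_zero_of_toBlocks₁₂_mulVec_eq_zero hg
  set f : 𝕜 → Matrix (l ⊕ l) (l ⊕ l) 𝕜 := fun t => fromBlocks 1 0 (t • S) 1 * g
  have hf : Continuous f := by fun_prop
  have hf_block (t : 𝕜) :
      (fromBlocks 1 0 (t • S) 1 * g).toBlocks₂₂ = g.toBlocks₂₂ + t • (S * g.toBlocks₁₂) := by
    rw [← g.fromBlocks_toBlocks, fromBlocks_multiply]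
    simp [add_comm]
  have hdense := dense_setOf_det_add_smul_ne_zero (M := S * g.toBlocks₁₂) hdet.ne_zero
  have hg0 : f 0 = g := by simp [f]
  rw [← hg0]
  refine closure_mono ?_ (mem_closure_image hf.continuousAt (hdense.closure_eq ▸ Set.mem_univ 0))
  rintro _ ⟨t, ht, rfl⟩
  exact ⟨mul_mem (fromBlocks_one_zero_symm_one_mem (hS.smul t)) hg,
    by rw [hf_block]; exact isUnit_iff_ne_zero.2 ht⟩

end SymplecticGroup

open SymplecticGroup in
theorem stmt_14_general (n : ℕ)
    (J : Matrix (Fin n ⊕ Fin n) (Fin n ⊕ Fin n) ℂ)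
    (hJ : J = Matrix.fromBlocks 0 1 (-1) 0)
    (Sp P₁ P₂ K : Set (Matrix (Fin n ⊕ Fin n) (Fin n ⊕ Fin n) ℂ))
    (hSp : Sp = {M | M * J * Mᵀ = J})
    (hP₁ : P₁ = {g ∈ Sp | ∀ i j : Fin n, g (Sum.inr i) (Sum.inl j) = 0})
    (hP₂ : P₂ = {g ∈ Sp | ∀ i j : Fin n, g (Sum.inl i) (Sum.inr j) = 0})
    (hK : K = {g ∈ Sp | ∀ i j : Fin n,
      g (Sum.inr i) (Sum.inl j) = 0 ∧ g (Sum.inl i) (Sum.inr j) = 0}) :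
    P₁ ∩ P₂ = K ∧
      ∀ g ∈ Sp, g ∈ closure {m | ∃ a ∈ P₁, ∃ b ∈ P₂, m = a * b} := by
  have hJ' : J = -Matrix.J (Fin n) ℂ := by simp [hJ, Matrix.J, fromBlocks_neg]
  have hSp' : Sp = symplecticGroup (Fin n) ℂ := by
    ext M
    rw [hSp, hJ', Set.mem_ofPred_eq, SetLike.mem_coe, mem_iff_neg_J]
  subst hP₁ hP₂ hK
  refine ⟨?_, fun g hg => ?_⟩
  · ext g
    simp only [Set.mem_inter_iff, Set.mem_ofPred_eq, forall_and]
    tauto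
  rw [hSp'] at hg ⊢
  refine closure_mono ?_ (mem_closure_setOf_isUnit_det_toBlocks₂₂ hg)
  rintro _ ⟨hh, hdet⟩
  obtain ⟨a, ha, ha₂₁, b, hb, hb₁₂, rfl⟩ := exists_mul_eq_of_isUnit_det_toBlocks₂₂ hh hdet
  exact ⟨a, ⟨ha, fun i j => congrFun₂ ha₂₁ i j⟩, b, ⟨hb, fun i j => congrFun₂ hb₁₂ i j⟩, rfl⟩

/-- **Theorem 2.5 (1)** for the Hermitian pair `(Sp_{2n}(ℂ), GL_n(ℂ))` with
`Q = K`: the two opposite Siegel parabolic subgroups `P₁` and `P₂` of the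
symplectic group intersect in the block diagonal subgroup `K ≅ GL_n(ℂ)` and
their product `P₁P₂` is dense in `Sp_{2n}(ℂ)`. -/
theorem stmt_14 (n : ℕ) (hn : 1 ≤ n)
    (J : Matrix (Fin n ⊕ Fin n) (Fin n ⊕ Fin n) ℂ)
    (hJ : J = Matrix.fromBlocks 0 1 (-1) 0)
    (Sp P₁ P₂ K : Set (Matrix (Fin n ⊕ Fin n) (Fin n ⊕ Fin n) ℂ))
    (hSp : Sp = {M | M * J * Mᵀ = J})
    (hP₁ : P₁ = {g ∈ Sp | ∀ i j : Fin n, g (Sum.inr i) (Sum.inl j) = 0})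
    (hP₂ : P₂ = {g ∈ Sp | ∀ i j : Fin n, g (Sum.inl i) (Sum.inr j) = 0})
    (hK : K = {g ∈ Sp | ∀ i j : Fin n,
      g (Sum.inr i) (Sum.inl j) = 0 ∧ g (Sum.inl i) (Sum.inr j) = 0}) :
    P₁ ∩ P₂ = K ∧
      ∀ g ∈ Sp, g ∈ closure {m | ∃ a ∈ P₁, ∃ b ∈ P₂, m = a * b} :=
  stmt_14_general n J hJ Sp P₁ P₂ K hSp hP₁ hP₂ hK
end
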